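/- Let n ≥ 2 be an integer and Ω ⊆ ℝⁿ an open set. Let u: Ω → ℝ be smooth. Then at every point of Ω at which u ≠ 0, one has ‖Hess u − (Δu/n)·Id‖_F² = (1/n)·u^{n−1}·div(u^{2−n}·∇(Δu)) + (1/2)·Δ(|∇u|² − (2/n)uΔu), where div denotes the Euclidean divergence of a vector field and ‖·‖_F the Frobenius norm of a matrix. -/

import Mathlib

open MeasureTheory
open scoped RealInnerProductSpace

noncomputable section

/-- The Euclidean Laplacian `Δf = Σᵢ ∂²f/∂xᵢ²`. -/
def lapl {n : ℕ} (f : EuclideanSpace ℝ (Fin n) → ℝ) (x : EuclideanSpace ℝ (Fin n)) : ℝ :=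
  ∑ i, iteratedFDeriv ℝ 2 f x ![EuclideanSpace.single i 1, EuclideanSpace.single i 1]

/-- The `(i,j)` entry of the Euclidean Hessian matrix of `f` at `x`. -/
def hess {n : ℕ} (f : EuclideanSpace ℝ (Fin n) → ℝ) (x : EuclideanSpace ℝ (Fin n))
    (i j : Fin n) : ℝ :=
  iteratedFDeriv ℝ 2 f x ![EuclideanSpace.single i 1, EuclideanSpace.single j 1]

/-- The Euclidean divergence `div X = Σᵢ ∂Xᵢ/∂xᵢ` of a vector field. -/
def divg {n : ℕ} (X : EuclideanSpace ℝ (Fin n) → EuclideanSpace ℝ (Fin n))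
    (x : EuclideanSpace ℝ (Fin n)) : ℝ :=
  ∑ i, fderiv ℝ (fun y => X y i) x (EuclideanSpace.single i 1)

namespace ObataAux

/-- partial derivative in direction `i` -/
def pd {n : ℕ} (i : Fin n) (f : EuclideanSpace ℝ (Fin n) → ℝ)
    (y : EuclideanSpace ℝ (Fin n)) : ℝ :=
  fderiv ℝ f y (EuclideanSpace.single i 1)

variable {n : ℕ} {Ω : Set (EuclideanSpace ℝ (Fin n))} {f g a b u : EuclideanSpace ℝ (Fin n) → ℝ}
  {x : EuclideanSpace ℝ (Fin n)}

lemma contDiffOn_pd (hΩ : IsOpen Ω) (hf : ContDiffOn ℝ (⊤ : ℕ∞) f Ω) (i : Fin n) :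
    ContDiffOn ℝ (⊤ : ℕ∞) (pd i f) Ω :=
  (hf.fderiv_of_isOpen hΩ (by simp)).clm_apply contDiffOn_const

lemma diffAt (hΩ : IsOpen Ω) (hf : ContDiffOn ℝ (⊤ : ℕ∞) f Ω) (hx : x ∈ Ω) :
    DifferentiableAt ℝ f x :=
  (hf.contDiffAt (hΩ.mem_nhds hx)).differentiableAt (by simp)

lemma pd_congr (h : f =ᶠ[nhds x] g) (i : Fin n) : pd i f x = pd i g x := by
  unfold pd; rw [h.fderiv_eq]

lemma pd_pd_eq (hf : ContDiffAt ℝ (⊤ : ℕ∞) f x) (i j : Fin n) :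
    pd i (pd j f) x
      = fderiv ℝ (fderiv ℝ f) x (EuclideanSpace.single i 1) (EuclideanSpace.single j 1) := by
  have hdf : DifferentiableAt ℝ (fderiv ℝ f) x :=
    (hf.fderiv_right (m := 1) (WithTop.coe_le_coe.mpr le_top)).differentiableAt one_ne_zero
  unfold pd
  rw [fderiv_clm_apply hdf (differentiableAt_const _)]
  simp

lemma pd_comm (hf : ContDiffAt ℝ (⊤ : ℕ∞) f x) (i j : Fin n) :
    pd i (pd j f) x = pd j (pd i f) x := by
  rw [pd_pd_eq hf, pd_pd_eq hf]
  exact hf.isSymmSndFDerivAt (by rw [minSmoothness_of_isRCLikeNormedField]; exact WithTop.coe_le_coe.mpr le_top) _ _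

lemma hess_eq (hf : ContDiffAt ℝ (⊤ : ℕ∞) f x) (i j : Fin n) :
    hess f x i j = pd i (pd j f) x := by
  rw [hess, iteratedFDeriv_two_apply, pd_pd_eq hf]
  simp

lemma lapl_eq (hf : ContDiffAt ℝ (⊤ : ℕ∞) f x) :
    lapl f x = ∑ i, pd i (pd i f) x := by
  unfold lapl
  exact Finset.sum_congr rfl fun i _ => by
    rw [iteratedFDeriv_two_apply, pd_pd_eq hf]; simp

lemma lapl_congr (h : f =ᶠ[nhds x] g) : lapl f x = lapl g x := by
  unfold lapl
  refine Finset.sum_congr rfl fun i _ => ?_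
  rw [iteratedFDeriv_two_apply, iteratedFDeriv_two_apply, h.fderiv.fderiv_eq]

lemma gradient_apply (f : EuclideanSpace ℝ (Fin n) → ℝ) (x : EuclideanSpace ℝ (Fin n)) (i : Fin n) :
    gradient f x i = pd i f x := by
  have h := @InnerProductSpace.toDual_symm_apply ℝ (EuclideanSpace ℝ (Fin n)) _ _ _ _
      (EuclideanSpace.single i 1) (fderiv ℝ f x)
  simp only [EuclideanSpace.inner_single_right, starRingEnd_apply, star_trivial, one_mul] at h
  exact h

lemma pd_sum {ι : Type*} {s : Finset ι} {g : ι → EuclideanSpace ℝ (Fin n) → ℝ}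
    (h : ∀ k ∈ s, DifferentiableAt ℝ (g k) x) (i : Fin n) :
    pd i (fun y => ∑ k ∈ s, g k y) x = ∑ k ∈ s, pd i (g k) x := by
  unfold pd; rw [fderiv_fun_sum h]; simp

lemma pd_mul (ha : DifferentiableAt ℝ a x) (hb : DifferentiableAt ℝ b x) (i : Fin n) :
    pd i (fun y => a y * b y) x = pd i a x * b x + a x * pd i b x := by
  unfold pd; rw [fderiv_fun_mul ha hb]; simp; ring

lemma pd_sub (ha : DifferentiableAt ℝ a x) (hb : DifferentiableAt ℝ b x) (i : Fin n) :
    pd i (fun y => a y - b y) x = pd i a x - pd i b x := by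
  unfold pd; rw [fderiv_fun_sub ha hb]; simp

lemma pd_add (ha : DifferentiableAt ℝ a x) (hb : DifferentiableAt ℝ b x) (i : Fin n) :
    pd i (fun y => a y + b y) x = pd i a x + pd i b x := by
  unfold pd; rw [fderiv_fun_add ha hb]; simp

lemma pd_const_mul (hb : DifferentiableAt ℝ b x) (c : ℝ) (i : Fin n) :
    pd i (fun y => c * b y) x = c * pd i b x := by
  unfold pd; rw [fderiv_const_mul hb]; simp

lemma pd_sq (ha : DifferentiableAt ℝ a x) (i : Fin n) :
    pd i (fun y => a y ^ 2) x = 2 * a x * pd i a x := by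
  have h2 : (fun y => a y ^ 2) = fun y => a y * a y := by funext y; ring
  rw [h2, pd_mul ha ha]; ring

lemma pd_zpow (hu : DifferentiableAt ℝ u x) (h0 : u x ≠ 0) (m : ℤ) (i : Fin n) :
    pd i (fun y => u y ^ m) x = (m : ℝ) * u x ^ (m - 1) * pd i u x := by
  have h := ((hasDerivAt_zpow m (u x) (Or.inl h0)).comp_hasFDerivAt x hu.hasFDerivAt).fderiv
  unfold pd
  rw [show (fun y => u y ^ m) = (fun t : ℝ => t ^ m) ∘ u from rfl, h]
  simp [mul_assoc]

lemma sum2_const_mul {n : ℕ} (c : ℝ) (f : Fin n → Fin n → ℝ) :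
    ∑ i, ∑ k, c * f i k = c * ∑ i, ∑ k, f i k := by
  simp_rw [← Finset.mul_sum]

end ObataAux

open ObataAux Filter

/-- the flat (`v ≡ 1`) case of the divergence-type lemma localizing
Obata's argument. -/
theorem obata_divergence_lemma_flat (n : ℕ) (hn : 2 ≤ n)
    (Ω : Set (EuclideanSpace ℝ (Fin n))) (hΩ : IsOpen Ω)
    (u : EuclideanSpace ℝ (Fin n) → ℝ) (hu : ContDiffOn ℝ (⊤ : ℕ∞) u Ω) :
    ∀ x ∈ Ω, u x ≠ 0 →
      ∑ i, ∑ j, (hess u x i j - (lapl u x / n) * (if i = j then 1 else 0)) ^ 2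
      = (1 / n) * u x ^ ((n : ℤ) - 1) *
          divg (fun y => u y ^ ((2 : ℤ) - n) • gradient (lapl u) y) x
        + (1 / 2) * lapl (fun y => ‖gradient u y‖ ^ 2 - (2 / n) * u y * lapl u y) x := by
  classical
  intro x hx hux
  have hNn : (n : ℝ) ≠ 0 := by
    have : n ≠ 0 := by omega
    exact_mod_cast this
  have hxn : Ω ∈ nhds x := hΩ.mem_nhds hx
  -- smoothness of iterated partials
  have hP : ∀ i, ContDiffOn ℝ (⊤ : ℕ∞) (pd i u) Ω := fun i => contDiffOn_pd hΩ hu i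
  have hQ : ∀ i j, ContDiffOn ℝ (⊤ : ℕ∞) (pd i (pd j u)) Ω := fun i j => contDiffOn_pd hΩ (hP j) i
  have hR : ∀ i j k, ContDiffOn ℝ (⊤ : ℕ∞) (pd i (pd j (pd k u))) Ω :=
    fun i j k => contDiffOn_pd hΩ (hQ j k) i
  have hca : ∀ {f : EuclideanSpace ℝ (Fin n) → ℝ}, ContDiffOn ℝ (⊤ : ℕ∞) f Ω →
      ∀ {y}, y ∈ Ω → ContDiffAt ℝ (⊤ : ℕ∞) f y := fun {f} hf {y} hy => hf.contDiffAt (hΩ.mem_nhds hy)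
  have hda : ∀ {f : EuclideanSpace ℝ (Fin n) → ℝ}, ContDiffOn ℝ (⊤ : ℕ∞) f Ω →
      ∀ {y}, y ∈ Ω → DifferentiableAt ℝ f y := fun {f} hf {y} hy => diffAt hΩ hf hy
  -- symmetry of second partials on Ω
  have hsymQ : ∀ y ∈ Ω, ∀ i j, pd i (pd j u) y = pd j (pd i u) y :=
    fun y hy i j => pd_comm (hca hu hy) i j
  -- Laplacian on Ω
  have hlapl : ∀ y ∈ Ω, lapl u y = ∑ k, pd k (pd k u) y := fun y hy => lapl_eq (hca hu hy)
  -- gradient of the Laplacian on Ω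
  have hgl : ∀ y ∈ Ω, ∀ i, pd i (lapl u) y = ∑ k, pd i (pd k (pd k u)) y := by
    intro y hy i
    have hev : lapl u =ᶠ[nhds y] fun z => ∑ k, pd k (pd k u) z :=
      eventuallyEq_of_mem (hΩ.mem_nhds hy) fun z hz => hlapl z hz
    rw [pd_congr hev i]
    exact pd_sum (fun k _ => hda (hQ k k) hy) i
  -- the key third-derivative symmetry
  have hswap : ∀ i k, pd k (pd k (pd i u)) x = pd i (pd k (pd k u)) x := by
    intro i k
    have h1 : pd k (pd k (pd i u)) x = pd k (pd i (pd k u)) x := by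
      refine pd_congr (eventuallyEq_of_mem hxn fun y hy => ?_) k
      exact hsymQ y hy k i
    have h2 : pd k (pd i (pd k u)) x = pd i (pd k (pd k u)) x := pd_comm (hca (hP k) hx) k i
    rw [h1, h2]
  -- LHS
  have hLHS : ∑ i, ∑ j, (hess u x i j - (lapl u x / n) * (if i = j then 1 else 0)) ^ 2
      = (∑ i, ∑ k, pd i (pd k u) x * pd i (pd k u) x)
        - (∑ k, pd k (pd k u) x) * (∑ k, pd k (pd k u) x) / n := by
    have hc : lapl u x = ∑ k, pd k (pd k u) x := hlapl x hx
    set L : ℝ := ∑ k, pd k (pd k u) x with hLdef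
    calc ∑ i, ∑ j, (hess u x i j - (lapl u x / n) * (if i = j then 1 else 0)) ^ 2
        = ∑ i, ∑ j, (pd i (pd j u) x * pd i (pd j u) x
            + (if i = j then (L/n)^2 - 2*(L/n)*pd i (pd j u) x else 0)) := by
          refine Finset.sum_congr rfl fun i _ => Finset.sum_congr rfl fun j _ => ?_
          rw [hess_eq (hca hu hx) i j, hc]
          by_cases h : i = j <;> simp [h] <;> ring
      _ = (∑ i, ∑ j, pd i (pd j u) x * pd i (pd j u) x)
            + ∑ i, ((L/n)^2 - 2*(L/n)*pd i (pd i u) x) := by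
          rw [← Finset.sum_add_distrib]
          refine Finset.sum_congr rfl fun i _ => ?_
          rw [Finset.sum_add_distrib, Finset.sum_ite_eq]
          simp
      _ = (∑ i, ∑ k, pd i (pd k u) x * pd i (pd k u) x) + ((n:ℝ)*(L/n)^2 - 2*(L/n)*L) := by
          rw [Finset.sum_sub_distrib, Finset.sum_const, ← Finset.mul_sum, nsmul_eq_mul,
            Finset.card_univ, Fintype.card_fin, ← hLdef]
      _ = _ := by field_simp; ring
  -- divergence term
  have hdivg : divg (fun y => u y ^ ((2 : ℤ) - n) • gradient (lapl u) y) x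
      = (2 - (n:ℝ)) * u x ^ ((2:ℤ) - n - 1)
          * (∑ i, pd i u x * ∑ k, pd i (pd k (pd k u)) x)
        + u x ^ ((2:ℤ) - n) * ∑ i, ∑ k, pd i (pd i (pd k (pd k u))) x := by
    have hterm : ∀ i : Fin n,
        pd i (fun y => (u y ^ ((2 : ℤ) - n) • gradient (lapl u) y) i) x
        = (2 - (n:ℝ)) * u x ^ ((2:ℤ) - n - 1)
            * (pd i u x * ∑ k, pd i (pd k (pd k u)) x)
          + u x ^ ((2:ℤ) - n) * ∑ k, pd i (pd i (pd k (pd k u))) x := by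
      intro i
      have hev : (fun y => (u y ^ ((2 : ℤ) - n) • gradient (lapl u) y) i)
          =ᶠ[nhds x] fun y => u y ^ ((2 : ℤ) - n) * ∑ k, pd i (pd k (pd k u)) y := by
        filter_upwards [hxn] with y hy
        have hg : gradient (lapl u) y i = ∑ k, pd i (pd k (pd k u)) y := by
          rw [gradient_apply]; exact hgl y hy i
        simp [PiLp.smul_apply, smul_eq_mul, hg]
      have h1 : DifferentiableAt ℝ (fun y => u y ^ ((2 : ℤ) - n)) x :=
        (hda hu hx).zpow (Or.inl hux)
      have h2 : DifferentiableAt ℝ (fun y => ∑ k, pd i (pd k (pd k u)) y) x :=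
        DifferentiableAt.fun_sum fun k _ => hda (hR i k k) hx
      rw [pd_congr hev i, pd_mul h1 h2 i, pd_zpow (hda hu hx) hux _ i,
        pd_sum (fun k _ => hda (hR i k k) hx) i]
      push_cast
      ring
    calc divg (fun y => u y ^ ((2 : ℤ) - n) • gradient (lapl u) y) x
        = ∑ i, pd i (fun y => (u y ^ ((2 : ℤ) - n) • gradient (lapl u) y) i) x := rfl
      _ = ∑ i, ((2 - (n:ℝ)) * u x ^ ((2:ℤ) - n - 1)
              * (pd i u x * ∑ k, pd i (pd k (pd k u)) x)
            + u x ^ ((2:ℤ) - n) * ∑ k, pd i (pd i (pd k (pd k u))) x) :=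
          Finset.sum_congr rfl fun i _ => hterm i
      _ = _ := by rw [Finset.sum_add_distrib, ← Finset.mul_sum, ← Finset.mul_sum]
  -- the function inside the second Laplacian, on Ω
  have hpdG : ∀ y ∈ Ω, ∀ j,
      pd j (fun z => (∑ k, pd k u z ^ 2) - 2/(n:ℝ) * (u z * ∑ k, pd k (pd k u) z)) y
      = (∑ k, 2 * pd k u y * pd j (pd k u) y)
        - 2/(n:ℝ) * (pd j u y * (∑ k, pd k (pd k u) y) + u y * ∑ k, pd j (pd k (pd k u)) y) := by
    intro y hy j
    have hd1 : DifferentiableAt ℝ (fun z => ∑ k, pd k u z ^ 2) y :=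
      DifferentiableAt.fun_sum fun k _ => (hda (hP k) hy).pow 2
    have hd2a : DifferentiableAt ℝ (fun z => u z * ∑ k, pd k (pd k u) z) y :=
      (hda hu hy).mul (DifferentiableAt.fun_sum fun k _ => hda (hQ k k) hy)
    rw [pd_sub hd1 (hd2a.const_mul _) j, pd_sum (fun k _ => (hda (hP k) hy).fun_pow 2) j,
      pd_const_mul hd2a _ j,
      pd_mul (hda hu hy) (DifferentiableAt.fun_sum fun k _ => hda (hQ k k) hy) j,
      pd_sum (fun k _ => hda (hQ k k) hy) j]
    congr 1
    exact Finset.sum_congr rfl fun k _ => by rw [pd_sq (hda (hP k) hy) j]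
  -- second partials of that function at x
  have hpdpdG : ∀ i : Fin n,
      pd i (pd i (fun z => (∑ k, pd k u z ^ 2) - 2/(n:ℝ) * (u z * ∑ k, pd k (pd k u) z))) x
      = (∑ k, (2 * (pd i (pd k u) x * pd i (pd k u) x)
            + 2 * (pd k u x * pd i (pd i (pd k u)) x)))
        - 2/(n:ℝ) * ((pd i (pd i u) x * (∑ k, pd k (pd k u) x)
              + pd i u x * ∑ k, pd i (pd k (pd k u)) x)
            + (pd i u x * (∑ k, pd i (pd k (pd k u)) x)
              + u x * ∑ k, pd i (pd i (pd k (pd k u))) x)) := by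
    intro i
    have hev : pd i (fun z => (∑ k, pd k u z ^ 2) - 2/(n:ℝ) * (u z * ∑ k, pd k (pd k u) z))
        =ᶠ[nhds x] fun y => (∑ k, 2 * pd k u y * pd i (pd k u) y)
          - 2/(n:ℝ) * (pd i u y * (∑ k, pd k (pd k u) y) + u y * ∑ k, pd i (pd k (pd k u)) y) :=
      eventuallyEq_of_mem hxn fun y hy => hpdG y hy i
    have hd1 : DifferentiableAt ℝ (fun y => ∑ k, 2 * pd k u y * pd i (pd k u) y) x :=
      DifferentiableAt.fun_sum fun k _ => ((hda (hP k) hx).const_mul 2).mul (hda (hQ i k) hx)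
    have hd2a : DifferentiableAt ℝ (fun y => pd i u y * ∑ k, pd k (pd k u) y) x :=
      (hda (hP i) hx).mul (DifferentiableAt.fun_sum fun k _ => hda (hQ k k) hx)
    have hd2b : DifferentiableAt ℝ (fun y => u y * ∑ k, pd i (pd k (pd k u)) y) x :=
      (hda hu hx).mul (DifferentiableAt.fun_sum fun k _ => hda (hR i k k) hx)
    rw [pd_congr hev i, pd_sub hd1 ((hd2a.fun_add hd2b).const_mul _) i,
      pd_sum (fun k _ => ((hda (hP k) hx).const_mul 2).fun_mul (hda (hQ i k) hx)) i,
      pd_const_mul (hd2a.fun_add hd2b) _ i, pd_add hd2a hd2b i,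
      pd_mul (hda (hP i) hx) (DifferentiableAt.fun_sum fun k _ => hda (hQ k k) hx) i,
      pd_mul (hda hu hx) (DifferentiableAt.fun_sum fun k _ => hda (hR i k k) hx) i,
      pd_sum (fun k _ => hda (hQ k k) hx) i, pd_sum (fun k _ => hda (hR i k k) hx) i]
    congr 1
    refine Finset.sum_congr rfl fun k _ => ?_
    rw [pd_mul ((hda (hP k) hx).const_mul 2) (hda (hQ i k) hx) i,
      pd_const_mul (hda (hP k) hx) 2 i]
    ring
  -- symmetrization of the mixed third-derivative sum
  have hBB : ∑ i, ∑ k, pd k u x * pd i (pd i (pd k u)) x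
      = ∑ i, pd i u x * ∑ k, pd i (pd k (pd k u)) x := by
    rw [Finset.sum_comm]
    refine Finset.sum_congr rfl fun i _ => ?_
    rw [Finset.mul_sum]
    exact Finset.sum_congr rfl fun k _ => by rw [hswap i k]
  -- the second Laplacian term
  have hlaplF : lapl (fun y => ‖gradient u y‖ ^ 2 - (2 / n) * u y * lapl u y) x
      = 2 * (∑ i, ∑ k, pd i (pd k u) x * pd i (pd k u) x)
        + 2 * (∑ i, pd i u x * ∑ k, pd i (pd k (pd k u)) x)
        - 2/(n:ℝ) * ((∑ k, pd k (pd k u) x) * (∑ k, pd k (pd k u) x)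
            + 2 * (∑ i, pd i u x * ∑ k, pd i (pd k (pd k u)) x)
            + u x * ∑ i, ∑ k, pd i (pd i (pd k (pd k u))) x) := by
    have hev : (fun y => ‖gradient u y‖ ^ 2 - (2 / n) * u y * lapl u y)
        =ᶠ[nhds x] fun z => (∑ k, pd k u z ^ 2) - 2/(n:ℝ) * (u z * ∑ k, pd k (pd k u) z) := by
      filter_upwards [hxn] with y hy
      have h1 : ‖gradient u y‖ ^ 2 = ∑ k, pd k u y ^ 2 := by
        rw [EuclideanSpace.norm_eq, Real.sq_sqrt (by positivity)]
        exact Finset.sum_congr rfl fun k _ => by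
          rw [Real.norm_eq_abs, sq_abs, gradient_apply]
      rw [h1, hlapl y hy]; ring
    have hGsm : ContDiffOn ℝ (⊤ : ℕ∞)
        (fun z => (∑ k, pd k u z ^ 2) - 2/(n:ℝ) * (u z * ∑ k, pd k (pd k u) z)) Ω := by
      refine ContDiffOn.sub ?_ ?_
      · exact ContDiffOn.sum fun k _ => (hP k).pow 2
      · exact contDiffOn_const.mul (hu.mul (ContDiffOn.sum fun k _ => hQ k k))
    rw [lapl_congr hev, lapl_eq (hca hGsm hx)]
    calc ∑ i, pd i (pd i (fun z => (∑ k, pd k u z ^ 2)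
            - 2/(n:ℝ) * (u z * ∑ k, pd k (pd k u) z))) x
        = ∑ i, ((∑ k, (2 * (pd i (pd k u) x * pd i (pd k u) x)
              + 2 * (pd k u x * pd i (pd i (pd k u)) x)))
            - 2/(n:ℝ) * ((pd i (pd i u) x * (∑ k, pd k (pd k u) x)
                  + pd i u x * ∑ k, pd i (pd k (pd k u)) x)
                + (pd i u x * (∑ k, pd i (pd k (pd k u)) x)
                  + u x * ∑ k, pd i (pd i (pd k (pd k u))) x))) :=
          Finset.sum_congr rfl fun i _ => hpdpdG i
      _ = (∑ i, ∑ k, (2 * (pd i (pd k u) x * pd i (pd k u) x)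
              + 2 * (pd k u x * pd i (pd i (pd k u)) x)))
          - 2/(n:ℝ) * ∑ i, ((pd i (pd i u) x * (∑ k, pd k (pd k u) x)
                + pd i u x * ∑ k, pd i (pd k (pd k u)) x)
              + (pd i u x * (∑ k, pd i (pd k (pd k u)) x)
                + u x * ∑ k, pd i (pd i (pd k (pd k u))) x)) := by
            rw [Finset.sum_sub_distrib, ← Finset.mul_sum]
      _ = (2 * (∑ i, ∑ k, pd i (pd k u) x * pd i (pd k u) x)
            + 2 * (∑ i, ∑ k, pd k u x * pd i (pd i (pd k u)) x))
          - 2/(n:ℝ) * (((∑ i, pd i (pd i u) x) * (∑ k, pd k (pd k u) x)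
                + (∑ i, pd i u x * ∑ k, pd i (pd k (pd k u)) x))
              + ((∑ i, pd i u x * ∑ k, pd i (pd k (pd k u)) x)
                + u x * ∑ i, ∑ k, pd i (pd i (pd k (pd k u))) x)) := by
            congr 1
            · rw [show (∑ i, ∑ k, (2 * (pd i (pd k u) x * pd i (pd k u) x)
                    + 2 * (pd k u x * pd i (pd i (pd k u)) x)))
                  = (∑ i, ∑ k, 2 * (pd i (pd k u) x * pd i (pd k u) x))
                    + ∑ i, ∑ k, 2 * (pd k u x * pd i (pd i (pd k u)) x) from by
                  rw [← Finset.sum_add_distrib]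
                  exact Finset.sum_congr rfl fun i _ => Finset.sum_add_distrib,
                sum2_const_mul, sum2_const_mul]
            · congr 1
              rw [Finset.sum_add_distrib, Finset.sum_add_distrib, Finset.sum_add_distrib,
                ← Finset.sum_mul, ← Finset.mul_sum]
      _ = _ := by rw [hBB]; ring
  -- put everything together
  rw [hLHS, hdivg, hlaplF]
  have hz1 : u x ^ ((n:ℤ) - 1) * u x ^ ((2:ℤ) - n - 1) = 1 := by
    rw [← zpow_add₀ hux, show ((n:ℤ) - 1) + ((2:ℤ) - n - 1) = 0 by ring, zpow_zero]
  have hz2 : u x ^ ((n:ℤ) - 1) * u x ^ ((2:ℤ) - n) = u x := by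
    rw [← zpow_add₀ hux, show ((n:ℤ) - 1) + ((2:ℤ) - n) = 1 by ring, zpow_one]
  set L : ℝ := ∑ k, pd k (pd k u) x
  set A : ℝ := ∑ i, ∑ k, pd i (pd k u) x * pd i (pd k u) x
  set B : ℝ := ∑ i, pd i u x * ∑ k, pd i (pd k (pd k u)) x
  set C : ℝ := ∑ i, ∑ k, pd i (pd i (pd k (pd k u))) x
  have key : (1 / (n:ℝ)) * u x ^ ((n:ℤ) - 1)
      * ((2 - (n:ℝ)) * u x ^ ((2:ℤ) - n - 1) * B + u x ^ ((2:ℤ) - n) * C)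
      = (1 / (n:ℝ)) * ((2 - (n:ℝ)) * B * (u x ^ ((n:ℤ) - 1) * u x ^ ((2:ℤ) - n - 1))
          + C * (u x ^ ((n:ℤ) - 1) * u x ^ ((2:ℤ) - n))) := by ring
  rw [key, hz1, hz2]
  field_simp
  ring
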